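/- arXiv:1105.3260 — 3 statements merged into one kernel-verified Lean document; each statement's English description precedes it below -/
import Mathlib

section
/- Consider the n-dimensional nonlinear nonautonomous delay system ẋ_i(t) = -a_ii(t)x_i(t) + Σ_{j≠i} a_ij(t)x_j(t) + Σ_{j=1}^n f_ij(t, x_j(h_ij(t))), i = 1,…,n, t ≥ t₀, where the a_ij are measurable essentially bounded, each f_ij(t,u) is continuous in u, measurable locally essentially bounded in t, and satisfies |f_ij(t,u)| ≤ b_ij(t)|u| with b_ij measurable essentially bounded, and the delays satisfy h_ij(t) ≤ t. Suppose there exist a_i > 0, τ > 0 and t₀ ≥ 0 such that inf_{t≥t₀} a_ii(t) ≥ a_i and t − h_ij(t) ≤ τ for all i,j, and that the n×n matrix B with diagonal entries b_ii = a_i − B_ii and off-diagonal entries b_ij = −A_ij − B_ij (i ≠ j), where A_ij = sup_{t≥t₀}|a_ij(t)| and B_ij = sup_{t≥t₀}|b_ij(t)|, is an M-matrix. Then every solution X(t) = (x_1(t),…,x_n(t))ᵀ of the system satisfies lim_{t→∞} X(t) = 0. -/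
/-!
With `ξ = M⁻¹ 1 > 0` (`M` the M-matrix of the hypothesis), row `i` of `M ξ = 1` says that in the
weighted box `|x j| ≤ K ξ j` the damping `a i i ≥ aLow i` beats the coupling and delay terms
by exactly `K`. Hence the box is invariant (on its face `|x i| = K ξ i` the solution points
inward), and while the last `τ` units of history lie in it, each `|x i|` falls below `ρ K ξ i`
within bounded time and stays there, for some `ρ < 1` independent of `K`. Iterating, the
solution enters the boxes of size `ρ ^ m K` for every `m`.
-/

open Real Filter

/-- A square real matrix is an M-matrix: off-diagonal entries are nonpositive,
the matrix is invertible and its inverse is entrywise nonnegative. -/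
def IsMMatrix {n : ℕ} (M : Matrix (Fin n) (Fin n) ℝ) : Prop :=
  (∀ i j, i ≠ j → M i j ≤ 0) ∧ IsUnit M.det ∧ ∀ i j, 0 ≤ M⁻¹ i j

open Set Topology
open scoped Matrix

theorem HasDerivAt.eventually_lt_of_neg {f : ℝ → ℝ} {f' t : ℝ} (hf : HasDerivAt f f' t)
    (hf' : f' < 0) : ∀ᶠ s in 𝓝[>] t, f s < f t := by
  have hslope : ∀ᶠ s in 𝓝[>] t, slope f t s < 0 :=
    ((hasDerivAt_iff_tendsto_slope.mp hf).mono_left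
      (nhdsWithin_mono t fun s hs => ne_of_gt hs)).eventually_lt_const hf'
  filter_upwards [hslope, self_mem_nhdsWithin] with s hs hts
  rw [slope_def_field, div_lt_iff₀ (sub_pos.2 hts)] at hs
  linarith

theorem IsGLB.frequently_nhdsGT_mem {S : Set ℝ} {a : ℝ} (ha : IsGLB S a) (hS : S.Nonempty)
    (haS : a ∉ S) : ∃ᶠ s in 𝓝[>] a, s ∈ S := by
  rw [frequently_nhdsWithin_iff]
  refine (frequently_nhdsWithin_iff.1 (ha.frequently_mem hS)).mono ?_
  rintro s ⟨hsS, has⟩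
  exact ⟨hsS, lt_of_le_of_ne has (ne_of_mem_of_not_mem hsS haS).symm⟩

theorem forall_le_of_hasDerivAt_neg_at_contact {ι : Type*} [Finite ι] {y y' : ι → ℝ → ℝ}
    {L : ι → ℝ} {c T : ℝ} (hcT : c ≤ T) (hy : ∀ k t, T ≤ t → HasDerivAt (y k) (y' k t) t)
    (hinit : ∀ k, ∀ s ∈ Icc c T, y k s ≤ L k)
    (hcontact : ∀ k t, T ≤ t → y k t = L k → (∀ j, ∀ s ∈ Icc c t, y j s ≤ L j) → y' k t < 0) :
    ∀ k s, c ≤ s → y k s ≤ L k := by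
  by_contra! hexit
  obtain ⟨k₀, s₀, hcs₀, hs₀⟩ := hexit
  -- `t₁ = inf S` is the first exit time: some `y k` touches `L k` there and exceeds it
  -- arbitrarily soon afterwards, against its negative derivative
  set S := {t | T ≤ t ∧ ∃ k, L k < y k t}
  have hS : S.Nonempty :=
    ⟨s₀, le_of_not_ge fun h => (hinit k₀ s₀ ⟨hcs₀, h⟩).not_gt hs₀, k₀, hs₀⟩
  have hglb : IsGLB S (sInf S) := isGLB_csInf hS ⟨T, fun t ht => ht.1⟩
  set t₁ := sInf S
  have hTt₁ : T ≤ t₁ := hglb.2 fun t ht => ht.1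
  have hbefore : ∀ k, ∀ s ∈ Ico c t₁, y k s ≤ L k := by
    rintro k s ⟨hcs, hst⟩
    by_cases hsT : s ≤ T
    · exact hinit k s ⟨hcs, hsT⟩
    · by_contra! hk
      exact (hglb.1 ⟨le_of_not_ge hsT, k, hk⟩).not_gt hst
  have hupto : ∀ k, ∀ s ∈ Icc c t₁, y k s ≤ L k := by
    rintro k s ⟨hcs, hst⟩
    rcases hst.lt_or_eq with hst | rfl
    · exact hbefore k s ⟨hcs, hst⟩
    rcases hTt₁.eq_or_lt with hT | hT
    · exact hinit k _ ⟨hcs, hT.ge⟩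
    refine le_of_tendsto
      ((hy k _ hTt₁).continuousAt.tendsto.mono_left (nhdsWithin_le_nhds (s := Iio t₁))) ?_
    filter_upwards [Ioo_mem_nhdsLT (hcT.trans_lt hT)] with s hs using hbefore k s ⟨hs.1.le, hs.2⟩
  have hnot : t₁ ∉ S := fun ⟨_, k, hk⟩ => (hupto k t₁ ⟨hcT.trans hTt₁, le_rfl⟩).not_gt hk
  obtain ⟨k, hk⟩ := frequently_exists.1 <|
    (hglb.frequently_nhdsGT_mem hS hnot).mono fun _ hs => hs.2
  have hderiv := hy k t₁ hTt₁
  have heq : y k t₁ = L k :=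
    (hupto k t₁ ⟨hcT.trans hTt₁, le_rfl⟩).antisymm <| isClosed_Ici.mem_of_frequently_of_tendsto
      (hk.mono fun _ => le_of_lt) (hderiv.continuousAt.tendsto.mono_left nhdsWithin_le_nhds)
  obtain ⟨s, hLs, hst⟩ :=
    (hk.and_eventually (hderiv.eventually_lt_of_neg (hcontact k t₁ hTt₁ heq hupto))).exists
  exact hLs.not_gt (heq ▸ hst)

/-- On the face `y k = K * w k` of the box `y ≤ K • w` this gives `y' k ≤ -K`: the box
attracts the family as long as the `τ`-history stays in it. -/
structure DelayDissipative {ι : Type*} (y y' : ι → ℝ → ℝ) (w c : ι → ℝ) (t₀ τ : ℝ) : Prop where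
  hasDerivAt : ∀ k t, t₀ ≤ t → HasDerivAt (y k) (y' k t) t
  deriv_le : ∀ K, 0 ≤ K → ∀ k t, t₀ ≤ t → (∀ j, ∀ s ∈ Icc (t - τ) t, y j s ≤ K * w j) →
    0 ≤ y k t → y' k t ≤ c k * (K * w k - y k t) - K

theorem exists_pos_lt_one_forall_mul_one_sub_le {ι : Type*} [Finite ι] (r : ι → ℝ) :
    ∃ ρ, 0 < ρ ∧ ρ < 1 ∧ ∀ k, r k * (1 - ρ) ≤ 1 / 2 := by
  have hsmall : ∀ k, ∀ᶠ ρ in 𝓝[<] (1 : ℝ), r k * (1 - ρ) ≤ 1 / 2 := fun k => by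
    have : Tendsto (fun ρ : ℝ => r k * (1 - ρ)) (𝓝[<] 1) (𝓝 0) :=
      ((by fun_prop : Continuous fun ρ : ℝ => r k * (1 - ρ)).tendsto' 1 0 (by simp)).mono_left
        nhdsWithin_le_nhds
    exact (this.eventually_lt_const (by norm_num)).mono fun _ => le_of_lt
  have hmem : ∀ᶠ ρ in 𝓝[<] (1 : ℝ), ρ ∈ Ioo 0 1 := Ioo_mem_nhdsLT one_pos
  obtain ⟨ρ, hρ, hρk⟩ := (hmem.and (eventually_all.2 hsmall)).exists
  exact ⟨ρ, hρ.1, hρ.2, hρk⟩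

namespace DelayDissipative

variable {ι : Type*} {y y' : ι → ℝ → ℝ} {w c : ι → ℝ} {t₀ τ : ℝ}

theorem forall_le_of_forall_le_Icc [Finite ι] (hD : DelayDissipative y y' w c t₀ τ)
    (hw : ∀ k, 0 ≤ w k) (hτ : 0 ≤ τ) {K : ℝ} (hK : 0 < K)
    (hinit : ∀ k, ∀ s ∈ Icc (t₀ - τ) t₀, y k s ≤ K * w k) :
    ∀ k s, t₀ - τ ≤ s → y k s ≤ K * w k := by
  refine forall_le_of_hasDerivAt_neg_at_contact (by linarith) hD.hasDerivAt hinit ?_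
  intro k t ht hkt hhist
  have hle := hD.deriv_le K hK.le k t ht (fun j s hs => hhist j s ⟨by linarith [hs.1], hs.2⟩)
    (hkt ▸ mul_nonneg hK.le (hw k))
  rw [hkt, sub_self, mul_zero] at hle
  linarith

theorem deriv_le_neg_half (hD : DelayDissipative y y' w c t₀ τ) {k : ι} {ρ K t : ℝ}
    (hc : 0 ≤ c k) (hρ : c k * w k * (1 - ρ) ≤ 1 / 2) (hK : 0 ≤ K) (ht : t₀ ≤ t)
    (hhist : ∀ j, ∀ s ∈ Icc (t - τ) t, y j s ≤ K * w j) (hρK : 0 ≤ ρ * K * w k)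
    (hyt : ρ * K * w k ≤ y k t) : y' k t ≤ -(K / 2) := by
  have hle := hD.deriv_le K hK k t ht hhist (hρK.trans hyt)
  have hgap : c k * (K * w k - y k t) ≤ K * (c k * w k * (1 - ρ)) := by
    nlinarith [mul_le_mul_of_nonneg_left hyt hc]
  nlinarith [mul_le_mul_of_nonneg_left hρ hK]

theorem eventually_le_mul (hD : DelayDissipative y y' w c t₀ τ) {k : ι} {ρ K T : ℝ}
    (hc : 0 ≤ c k) (hw : 0 ≤ w k) (hρ0 : 0 ≤ ρ) (hρ : c k * w k * (1 - ρ) ≤ 1 / 2)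
    (hτ : 0 ≤ τ) (hK : 0 < K) (hT : t₀ ≤ T) (hbound : ∀ j s, T - τ ≤ s → y j s ≤ K * w j) :
    ∀ᶠ t in atTop, y k t ≤ ρ * K * w k := by
  have hρK : 0 ≤ ρ * K * w k := by positivity
  have hdecay : ∀ t, T ≤ t → ρ * K * w k ≤ y k t → y' k t ≤ -(K / 2) := fun t hTt hyt =>
    hD.deriv_le_neg_half hc hρ hK.le (hT.trans hTt)
      (fun j s hs => hbound j s (by linarith [hs.1])) hρK hyt
  obtain ⟨t₁, hTt₁, ht₁⟩ : ∃ t₁, T ≤ t₁ ∧ y k t₁ ≤ ρ * K * w k := by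
    by_contra! habove
    set t₁ := T + 2 * (w k + 1)
    have hTt₁ : T ≤ t₁ := by linarith
    have hmvt := (convex_Ici T).image_sub_le_mul_sub_of_deriv_le
      (fun t ht => (hD.hasDerivAt k t (hT.trans ht)).continuousAt.continuousWithinAt)
      (fun t ht => (hD.hasDerivAt k t (hT.trans (interior_subset ht))).differentiableAt
        |>.differentiableWithinAt)
      (fun t ht => by
        have ht : T ≤ t := interior_subset ht
        rw [(hD.hasDerivAt k t (hT.trans ht)).deriv]
        exact hdecay t ht (habove t ht).le)
      T self_mem_Ici t₁ hTt₁ hTt₁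
    have hyT := hbound k T (by linarith)
    nlinarith [habove t₁ hTt₁]
  filter_upwards [eventually_ge_atTop t₁] with t ht
  refine image_le_of_deriv_right_lt_deriv_boundary (f' := y' k) (B' := fun _ => 0)
    (fun s hs => (hD.hasDerivAt k s (hT.trans (hTt₁.trans hs.1))).continuousAt.continuousWithinAt)
    (fun s hs => (hD.hasDerivAt k s (hT.trans (hTt₁.trans hs.1))).hasDerivWithinAt) ht₁
    (fun _ => hasDerivAt_const _ _) (fun s hs hys => ?_) ⟨ht, le_rfl⟩
  linarith [hdecay s (hTt₁.trans hs.1) hys.ge]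

theorem eventually_forall_le_mul [Finite ι] (hD : DelayDissipative y y' w c t₀ τ)
    (hc : ∀ k, 0 ≤ c k) (hw : ∀ k, 0 ≤ w k) {ρ K : ℝ} (hρ0 : 0 ≤ ρ)
    (hρ : ∀ k, c k * w k * (1 - ρ) ≤ 1 / 2) (hτ : 0 ≤ τ) (hK : 0 < K)
    (hbound : ∀ᶠ t in atTop, ∀ j, y j t ≤ K * w j) :
    ∀ᶠ t in atTop, ∀ j, y j t ≤ ρ * K * w j := by
  obtain ⟨T, hT⟩ := eventually_atTop.1 hbound
  refine eventually_all.2 fun k => hD.eventually_le_mul (T := max T t₀ + τ) (hc k) (hw k) hρ0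
    (hρ k) hτ hK (by linarith [le_max_right T t₀]) fun j s hs => hT s ?_ j
  linarith [le_max_left T t₀]

theorem eventually_lt [Finite ι] (hD : DelayDissipative y y' w c t₀ τ)
    (hcont : ∀ k, ContinuousOn (y k) (Icc (t₀ - τ) t₀)) (hw : ∀ k, 0 < w k)
    (hc : ∀ k, 0 ≤ c k) (hτ : 0 ≤ τ) (k : ι) {ε : ℝ} (hε : 0 < ε) :
    ∀ᶠ t in atTop, y k t < ε := by
  obtain ⟨ρ, hρ0, hρ1, hρ⟩ := exists_pos_lt_one_forall_mul_one_sub_le fun k => c k * w k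
  obtain ⟨K, hinit, hK⟩ : ∃ K, (∀ k, ∀ s ∈ Icc (t₀ - τ) t₀, y k s ≤ K * w k) ∧ 0 < K := by
    refine ((eventually_all.2 fun k => ?_).and (eventually_gt_atTop 0)).exists
    obtain ⟨C, hC⟩ := isCompact_Icc.bddAbove_image (hcont k)
    filter_upwards [(tendsto_id.atTop_mul_const (hw k)).eventually_ge_atTop C] with K hK s hs
    exact (hC (mem_image_of_mem _ hs)).trans hK
  have hglobal := hD.forall_le_of_forall_le_Icc (fun k => (hw k).le) hτ hK hinit
  have hiter : ∀ m : ℕ, ∀ᶠ t in atTop, ∀ j, y j t ≤ ρ ^ m * K * w j := by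
    intro m
    induction m with
    | zero =>
      filter_upwards [eventually_ge_atTop (t₀ - τ)] with t ht j
      simpa using hglobal j t ht
    | succ m ih =>
      filter_upwards [hD.eventually_forall_le_mul hc (fun k => (hw k).le) hρ0.le hρ hτ
        (by positivity) ih] with t ht j
      simpa [pow_succ, mul_comm, mul_left_comm, mul_assoc] using ht j
  have hsmall : Tendsto (fun m : ℕ => ρ ^ m * K * w k) atTop (𝓝 0) := by
    simpa using ((tendsto_pow_atTop_nhds_zero_of_lt_one hρ0.le hρ1).mul_const K).mul_const (w k)
  obtain ⟨m, hm⟩ := (hsmall.eventually_lt_const hε).exists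
  filter_upwards [hiter m] with t ht using (ht k).trans_lt hm

end DelayDissipative

/-- Tracking `x` and `-x` as one family turns the two-sided bounds `|x j| ≤ K * w j` into the
one-sided box of `DelayDissipative`. -/
theorem DelayDissipative.sumElim_neg {ι : Type*} {x x' d : ι → ℝ → ℝ} {w c : ι → ℝ} {t₀ τ : ℝ}
    (hx : ∀ i t, t₀ ≤ t → HasDerivAt (x i) (x' i t) t) (hd : ∀ i t, t₀ ≤ t → c i ≤ d i t)
    (hr : ∀ K, 0 ≤ K → ∀ i t, t₀ ≤ t → (∀ j, ∀ s ∈ Icc (t - τ) t, |x j s| ≤ K * w j) →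
      |x' i t + d i t * x i t| ≤ (c i * w i - 1) * K) :
    DelayDissipative (Sum.elim x (-x)) (Sum.elim x' (-x')) (Sum.elim w w) (Sum.elim c c) t₀ τ where
  hasDerivAt
    | .inl i, t, ht => hx i t ht
    | .inr i, t, ht => (hx i t ht).neg
  deriv_le K hK k t ht hhist hy := by
    have habs : ∀ j, ∀ s ∈ Icc (t - τ) t, |x j s| ≤ K * w j := fun j s hs => by
      have hpos := hhist (.inl j) s hs
      have hneg := hhist (.inr j) s hs
      simp only [Sum.elim_inl, Sum.elim_inr, Pi.neg_apply] at hpos hneg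
      exact abs_le.2 ⟨by linarith, hpos⟩
    rcases k with i | i <;>
    · have hrt := abs_le.1 (hr K hK i t ht habs)
      have hdamp := mul_le_mul_of_nonneg_right (hd i t ht) hy
      simp only [Sum.elim_inl, Sum.elim_inr, Pi.neg_apply] at hy hdamp ⊢
      linarith

theorem IsMMatrix.exists_pos_mulVec_eq_one {n : ℕ} {M : Matrix (Fin n) (Fin n) ℝ}
    (hM : IsMMatrix M) : ∃ ξ : Fin n → ℝ, (∀ i, 0 < ξ i) ∧ M *ᵥ ξ = fun _ => 1 := by
  obtain ⟨hoff, hdet, hinv⟩ := hM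
  have hMξ : M *ᵥ (M⁻¹ *ᵥ fun _ => 1) = fun _ => 1 := by
    rw [Matrix.mulVec_mulVec, Matrix.mul_nonsing_inv _ hdet, Matrix.one_mulVec]
  refine ⟨M⁻¹ *ᵥ fun _ => 1, fun i => ?_, hMξ⟩
  have hξ : ∀ j, 0 ≤ (M⁻¹ *ᵥ fun _ => 1) j := fun j => by
    simpa [Matrix.mulVec, dotProduct] using Finset.sum_nonneg fun l _ => hinv j l
  set ξ := M⁻¹ *ᵥ fun _ => 1
  -- row `i` of `M ξ = 1`: the off-diagonal part is `≤ 0`, so `M i i * ξ i ≥ 1`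
  have hrow := congr_fun hMξ i
  rw [Matrix.mulVec, dotProduct, ← Finset.add_sum_erase _ _ (Finset.mem_univ i)] at hrow
  have hoffsum : ∑ j ∈ Finset.univ.erase i, M i j * ξ j ≤ 0 :=
    Finset.sum_nonpos fun j hj =>
      mul_nonpos_of_nonpos_of_nonneg (hoff i j (Finset.ne_of_mem_erase hj).symm) (hξ j)
  refine (hξ i).lt_of_ne fun h => ?_
  rw [← h, mul_zero] at hrow
  linarith

theorem comparisonMatrix_mulVec_apply {ι : Type*} [Fintype ι] [DecidableEq ι] (c : ι → ℝ)
    (A B : ι → ι → ℝ) (ξ : ι → ℝ) (i : ι) :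
    (Matrix.of (fun i j => if i = j then c i - B i i else -(A i j) - B i j) *ᵥ ξ) i =
      c i * ξ i -
        (∑ j ∈ Finset.univ.filter (fun j => j ≠ i), A i j * ξ j + ∑ j, B i j * ξ j) := by
  rw [Matrix.mulVec, dotProduct, ← Finset.add_sum_erase _ _ (Finset.mem_univ i),
    ← Finset.add_sum_erase _ (fun j => B i j * ξ j) (Finset.mem_univ i), Finset.filter_ne',
    Matrix.of_apply, if_pos rfl, Finset.sum_congr rfl fun j hj => by
      rw [Matrix.of_apply, if_neg (Finset.ne_of_mem_erase hj).symm]]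
  simp only [sub_mul, neg_mul, Finset.sum_sub_distrib, Finset.sum_neg_distrib]
  ring

theorem abs_coupling_le {ι : Type*} [Fintype ι] [DecidableEq ι] {a b h : ι → ι → ℝ → ℝ}
    {f : ι → ι → ℝ → ℝ → ℝ} {x : ι → ℝ → ℝ} {A B : ι → ι → ℝ} {ξ : ι → ℝ} {τ t K : ℝ} {i : ι}
    (hA : ∀ j, |a i j t| ≤ A i j) (hB : ∀ j, |b i j t| ≤ B i j)
    (hf : ∀ j u, |f i j t u| ≤ b i j t * |u|) (hh : ∀ j, h i j t ≤ t ∧ t - h i j t ≤ τ)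
    (hx : ∀ j, ∀ s ∈ Icc (t - τ) t, |x j s| ≤ K * ξ j) :
    |∑ j ∈ Finset.univ.filter (fun j => j ≠ i), a i j t * x j t + ∑ j, f i j t (x j (h i j t))|
      ≤ (∑ j ∈ Finset.univ.filter (fun j => j ≠ i), A i j * ξ j + ∑ j, B i j * ξ j) * K := by
  have hlin : ∀ j, |a i j t * x j t| ≤ A i j * ξ j * K := fun j => by
    have hxt := hx j t ⟨by linarith [hh j], le_rfl⟩
    rw [abs_mul]
    nlinarith [mul_le_mul (hA j) hxt (abs_nonneg _) ((abs_nonneg _).trans (hA j))]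
  have hdelay : ∀ j, |f i j t (x j (h i j t))| ≤ B i j * ξ j * K := fun j => by
    have hxh := hx j (h i j t) ⟨by linarith [hh j], (hh j).1⟩
    have hb := (le_abs_self (b i j t)).trans (hB j)
    nlinarith [hf j (x j (h i j t)),
      mul_le_mul hb hxh (abs_nonneg _) ((abs_nonneg _).trans (hB j))]
  calc _ ≤ ∑ j ∈ Finset.univ.filter (fun j => j ≠ i), |a i j t * x j t|
        + ∑ j, |f i j t (x j (h i j t))| :=
        (abs_add_le _ _).trans
          (add_le_add (Finset.abs_sum_le_sum_abs _ _) (Finset.abs_sum_le_sum_abs _ _))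
    _ ≤ ∑ j ∈ Finset.univ.filter (fun j => j ≠ i), A i j * ξ j * K + ∑ j, B i j * ξ j * K :=
        add_le_add (Finset.sum_le_sum fun j _ => hlin j) (Finset.sum_le_sum fun j _ => hdelay j)
    _ = _ := by rw [add_mul, Finset.sum_mul, Finset.sum_mul]

theorem hahnfeldt_global_stability_general
    (n : ℕ) (t₀ τ : ℝ) (hτ : 0 < τ)
    (a b : Fin n → Fin n → ℝ → ℝ) (f : Fin n → Fin n → ℝ → ℝ → ℝ)
    (h : Fin n → Fin n → ℝ → ℝ)
    (fbound : ∀ i j t u, |f i j t u| ≤ b i j t * |u|)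
    (hdelay : ∀ i j t, h i j t ≤ t ∧ t - h i j t ≤ τ)
    (aLow : Fin n → ℝ) (haLow : ∀ i, 0 < aLow i)
    (hdiag : ∀ i t, t₀ ≤ t → aLow i ≤ a i i t)
    (Abnd Bbnd : Fin n → Fin n → ℝ)
    (hAbnd : ∀ i j t, t₀ ≤ t → |a i j t| ≤ Abnd i j)
    (hBbnd : ∀ i j t, t₀ ≤ t → |b i j t| ≤ Bbnd i j)
    (hM : IsMMatrix (Matrix.of fun i j =>
        if i = j then aLow i - Bbnd i i else -(Abnd i j) - Bbnd i j))
    (x : Fin n → ℝ → ℝ) (xcont : ∀ i, Continuous (x i))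
    (xsol : ∀ i, ∀ t, t₀ ≤ t → HasDerivAt (x i)
        (-(a i i t) * x i t
          + ∑ j ∈ Finset.univ.filter (fun j => j ≠ i), a i j t * x j t
          + ∑ j, f i j t (x j (h i j t))) t) :
    ∀ i, Tendsto (x i) atTop (nhds 0) := by
  obtain ⟨ξ, hξ, hMξ⟩ := hM.exists_pos_mulVec_eq_one
  have hD := DelayDissipative.sumElim_neg (w := ξ) (τ := τ) xsol hdiag
    fun K hK i t ht hx => by
      have hrow := congr_fun hMξ i
      rw [comparisonMatrix_mulVec_apply] at hrow
      -- the perturbation is the coupling, whose weight `aLow i * ξ i - 1` is read off `hrow`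
      convert abs_coupling_le (hAbnd i · t ht) (hBbnd i · t ht) (fbound i · t) (hdelay i · t) hx
        using 2
      · ring
      · linarith
  have hcont : ∀ k, ContinuousOn (Sum.elim x (-x) k) (Icc (t₀ - τ) t₀) := by
    rintro (i | i)
    · exact (xcont i).continuousOn
    · exact (xcont i).neg.continuousOn
  have hlt := hD.eventually_lt hcont (Sum.forall.2 ⟨hξ, hξ⟩)
    (Sum.forall.2 ⟨fun i => (haLow i).le, fun i => (haLow i).le⟩) hτ.le
  intro i
  refine tendsto_order.2 ⟨fun ε hε => ?_, fun ε hε => hlt (.inl i) hε⟩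
  filter_upwards [hlt (.inr i) (neg_pos.2 hε)] with t ht
  simp only [Sum.elim_inr, Pi.neg_apply] at ht
  linarith

/-- Theorem 1 (global stability criterion): for the nonlinear nonautonomous delay system
ẋ_i(t) = -a_ii(t)x_i(t) + Σ_{j≠i} a_ij(t)x_j(t) + Σ_j f_ij(t, x_j(h_ij(t))), t ≥ t₀,
if the diagonal coefficients are bounded below by a_i > 0, the delays are bounded by τ,
and the matrix B with b_ii = a_i − B_ii, b_ij = −A_ij − B_ij (i ≠ j) is an M-matrix
(where A_ij, B_ij bound |a_ij(t)|, |b_ij(t)| on [t₀,∞)), then every solution tends to 0. -/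
theorem hahnfeldt_global_stability
    (n : ℕ) (t₀ τ : ℝ) (ht₀ : 0 ≤ t₀) (hτ : 0 < τ)
    (a b : Fin n → Fin n → ℝ → ℝ) (f : Fin n → Fin n → ℝ → ℝ → ℝ)
    (h : Fin n → Fin n → ℝ → ℝ)
    (ameas : ∀ i j, Measurable (a i j)) (bmeas : ∀ i j, Measurable (b i j))
    (hmeas : ∀ i j, Measurable (h i j))
    (fmeas : ∀ i j u, Measurable (fun t => f i j t u))
    (fcont : ∀ i j t, Continuous (fun u => f i j t u))
    (fbound : ∀ i j t u, |f i j t u| ≤ b i j t * |u|)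
    (hdelay : ∀ i j t, h i j t ≤ t ∧ t - h i j t ≤ τ)
    (aLow : Fin n → ℝ) (haLow : ∀ i, 0 < aLow i)
    (hdiag : ∀ i t, t₀ ≤ t → aLow i ≤ a i i t)
    (Abnd Bbnd : Fin n → Fin n → ℝ)
    (hAbnd : ∀ i j t, t₀ ≤ t → |a i j t| ≤ Abnd i j)
    (hBbnd : ∀ i j t, t₀ ≤ t → |b i j t| ≤ Bbnd i j)
    (hM : IsMMatrix (Matrix.of fun i j =>
        if i = j then aLow i - Bbnd i i else -(Abnd i j) - Bbnd i j))
    (x : Fin n → ℝ → ℝ) (xcont : ∀ i, Continuous (x i))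
    (xsol : ∀ i, ∀ t, t₀ ≤ t → HasDerivAt (x i)
        (-(a i i t) * x i t
          + ∑ j ∈ Finset.univ.filter (fun j => j ≠ i), a i j t * x j t
          + ∑ j, f i j t (x j (h i j t))) t) :
    ∀ i, Tendsto (x i) atTop (nhds 0) :=
  hahnfeldt_global_stability_general n t₀ τ hτ a b f h fbound hdelay aLow haLow hdiag Abnd Bbnd
    hAbnd hBbnd hM x xcont xsol
end

section
/- Let α, β, γ, δ, p₀, c₀ > 0 and set η = βe^{−p₀/α}. If β > (γ + c₀)e^{p₀/α}, then the algebraic system αx·ln(K/x) − p₀x = 0, βx − γK − δx^{2/3}K − c₀K = 0 has a unique solution with x > 0 and K > 0, given explicitly by x* = ((η − γ − c₀)/δ)^{3/2} and K* = x* e^{p₀/α}. -/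
open Real

/-!
The first equation, divided by `αx`, says `log (K/x) = p₀/α`, i.e. `K = x e^{p₀/α}`. Substituting
this into the second equation and dividing by `x e^{p₀/α}` leaves `δ x^{2/3} = η − γ − c₀`, whose
right-hand side is positive exactly when `β > (γ + c₀) e^{p₀/α}`; the map `x ↦ x^{2/3}` is a
bijection of `[0, ∞)`, so `x` and then `K` are determined.
-/

namespace Model1

lemma tumor_equation_iff {α p x K : ℝ} (hα : α ≠ 0) (hx : 0 < x) (hK : 0 < K) :
    α * x * log (K / x) - p * x = 0 ↔ K = x * exp (p / α) := by
  rw [show α * x * log (K / x) - p * x = x * (α * log (K / x) - p) by ring, mul_eq_zero,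
    or_iff_right hx.ne', sub_eq_zero, mul_comm, ← eq_div_iff hα,
    ← exp_eq_exp, exp_log (div_pos hK hx), div_eq_iff hx.ne', mul_comm]

lemma carrying_capacity_equation_iff {β γ δ c e x y : ℝ} (hδ : δ ≠ 0) (he : e ≠ 0) (hx : x ≠ 0) :
    β * x - γ * (x * e) - δ * y * (x * e) - c * (x * e) = 0 ↔ y = (β * e⁻¹ - γ - c) / δ := by
  rw [show β * x - γ * (x * e) - δ * y * (x * e) - c * (x * e) =
      x * e * (β * e⁻¹ - γ - c - y * δ) by field_simp; ring, mul_eq_zero,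
    or_iff_right (mul_ne_zero hx he), sub_eq_zero, eq_comm, eq_div_iff hδ]

lemma rpow_two_thirds_eq_iff {x t : ℝ} (hx : 0 ≤ x) (ht : 0 ≤ t) :
    x ^ ((2 : ℝ) / 3) = t ↔ x = t ^ ((3 : ℝ) / 2) := by
  rw [show (2 : ℝ) / 3 = ((3 : ℝ) / 2)⁻¹ by norm_num, rpow_inv_eq hx ht (by norm_num)]

lemma equilibrium_iff {α β γ δ p c x K : ℝ} (hα : α ≠ 0) (hδ : δ ≠ 0) (hx : 0 < x) (hK : 0 < K)
    (ht : 0 ≤ (β * exp (-(p / α)) - γ - c) / δ) :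
    (α * x * log (K / x) - p * x = 0 ∧
      β * x - γ * K - δ * x ^ ((2 : ℝ) / 3) * K - c * K = 0) ↔
    K = x * exp (p / α) ∧ x = ((β * exp (-(p / α)) - γ - c) / δ) ^ ((3 : ℝ) / 2) := by
  rw [tumor_equation_iff hα hx hK, ← rpow_two_thirds_eq_iff hx.le ht, exp_neg]
  refine and_congr_right fun hKx => ?_
  subst hKx
  exact carrying_capacity_equation_iff hδ (exp_pos _).ne' hx.ne'

end Model1

theorem model1_unique_positive_equilibrium_general
    (α β γ δ p₀ c₀ : ℝ) (hα : 0 < α) (hδ : 0 < δ)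
    (hcond : β > (γ + c₀) * Real.exp (p₀ / α)) :
    let η := β * Real.exp (-(p₀ / α))
    let xstar := ((η - γ - c₀) / δ) ^ ((3:ℝ)/2)
    let Kstar := xstar * Real.exp (p₀ / α)
    (0 < xstar ∧ 0 < Kstar ∧
      α * xstar * Real.log (Kstar / xstar) - p₀ * xstar = 0 ∧
      β * xstar - γ * Kstar - δ * xstar ^ ((2:ℝ)/3) * Kstar - c₀ * Kstar = 0) ∧
    (∀ x K : ℝ, 0 < x → 0 < K →
      α * x * Real.log (K / x) - p₀ * x = 0 →
      β * x - γ * K - δ * x ^ ((2:ℝ)/3) * K - c₀ * K = 0 →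
      x = xstar ∧ K = Kstar) := by
  intro η xstar Kstar
  have hη : 0 < η - γ - c₀ := by
    have := mul_lt_mul_of_pos_right hcond (exp_pos (-(p₀ / α)))
    rw [mul_assoc, ← exp_add, add_neg_cancel, exp_zero, mul_one] at this
    linarith
  have ht : 0 < (η - γ - c₀) / δ := div_pos hη hδ
  have hx : 0 < xstar := rpow_pos_of_pos ht _
  have hK : 0 < Kstar := mul_pos hx (exp_pos _)
  refine ⟨⟨hx, hK, (Model1.equilibrium_iff hα.ne' hδ.ne' hx hK ht.le).mpr ⟨rfl, rfl⟩⟩, ?_⟩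
  intro x K hx0 hK0 h₁ h₂
  obtain ⟨rfl, rfl⟩ := (Model1.equilibrium_iff hα.ne' hδ.ne' hx0 hK0 ht.le).mp ⟨h₁, h₂⟩
  exact ⟨rfl, rfl⟩

/-- The equilibrium system of Model 1 with constant treatment rates,
αx ln(K/x) − p₀x = 0, βx − γK − δx^{2/3}K − c₀K = 0, has a unique positive solution,
given by x* = ((η − γ − c₀)/δ)^{3/2}, K* = x* e^{p₀/α} with η = βe^{−p₀/α},
provided β > (γ + c₀)e^{p₀/α}. -/
theorem model1_unique_positive_equilibrium
    (α β γ δ p₀ c₀ : ℝ) (hα : 0 < α) (hβ : 0 < β) (hγ : 0 < γ) (hδ : 0 < δ)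
    (hp₀ : 0 < p₀) (hc₀ : 0 < c₀)
    (hcond : β > (γ + c₀) * Real.exp (p₀ / α)) :
    let η := β * Real.exp (-(p₀ / α))
    let xstar := ((η - γ - c₀) / δ) ^ ((3:ℝ)/2)
    let Kstar := xstar * Real.exp (p₀ / α)
    (0 < xstar ∧ 0 < Kstar ∧
      α * xstar * Real.log (Kstar / xstar) - p₀ * xstar = 0 ∧
      β * xstar - γ * Kstar - δ * xstar ^ ((2:ℝ)/3) * Kstar - c₀ * Kstar = 0) ∧
    (∀ x K : ℝ, 0 < x → 0 < K →
      α * x * Real.log (K / x) - p₀ * x = 0 →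
      β * x - γ * K - δ * x ^ ((2:ℝ)/3) * K - c₀ * K = 0 →
      x = xstar ∧ K = Kstar) :=
  model1_unique_positive_equilibrium_general α β γ δ p₀ c₀ hα hδ hcond
end

section
/- Consider Model 1 with constant treatment rates: dx/dt = αx(t)ln(K(t)/x(t)) − p₀x(t), dK/dt = βx(h(t)) − γK(t) − δx^{2/3}(h(t))K(t) − c₀K(t), with α, β, γ, δ, p₀, c₀ > 0 and h(t) ≤ t measurable with t − h(t) ≤ τ. If β > (γ + c₀)e^{p₀/α}, then the positive equilibrium (x*, K*) = (((η − γ − c₀)/δ)^{3/2}, x* e^{p₀/α}), where η = βe^{−p₀/α}, is locally asymptotically stable. -/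
open Real Filter Set Topology

/-!
Write `Γ = γ + c₀`, `D = δ x*^{2/3}` and pass to the logarithmic deviations
`u = log x - log x*`, `v = log K - log K*`. Then `u' = α (v - u)` and, with `s = u (h t)`,
`v' = (Γ + D e^{2s/3}) (e^{ψ s - v} - 1)`, where the `K`-nullcline `ψ` is increasing, `ψ 0 = 0`,
`ψ s < s` for `s > 0` and `ψ s > s` for `s < 0`.

Stability: every box `|u|, |v| < r` is forward invariant, because at a first exit time one of `u`,
`v` sits on the boundary while the equations force its derivative to point strictly inwards.

Attraction: a function whose derivative is negative whenever it exceeds another one by `ε` has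
no larger `limsup`, so `limsup u ≤ limsup v ≤ ψ (limsup u)`. Since `ψ s < s` for `s > 0`, this
forces `limsup u ≤ 0` and then `limsup v ≤ ψ 0 = 0`; symmetrically both `liminf`s are `≥ 0`.
-/

theorem forall_ge_of_forall_Ico_imp {P : ℝ → Prop} {a : ℝ}
    (hstep : ∀ t, a ≤ t → (∀ s ∈ Ico a t, P s) → P t)
    (hopen : ∀ t, a ≤ t → P t → ∀ᶠ s in 𝓝[>] t, P s) :
    ∀ t, a ≤ t → P t := by
  by_contra! ⟨b, hab, hb⟩
  set S := {t | a ≤ t ∧ ¬P t}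
  have hS : S.Nonempty := ⟨b, hab, hb⟩
  have hSbdd : BddBelow S := ⟨a, fun t ht => ht.1⟩
  have ha : a ≤ sInf S := le_csInf hS fun t ht => ht.1
  have hP : P (sInf S) := hstep _ ha fun s hs =>
    by_contra fun hPs => (csInf_le hSbdd ⟨hs.1, hPs⟩).not_gt hs.2
  obtain ⟨c, hc, hcP⟩ := mem_nhdsGT_iff_exists_Ioo_subset.1 (hopen _ ha hP)
  obtain ⟨s, hsS, hsc⟩ := exists_lt_of_csInf_lt hS hc
  have hs : sInf S < s := (csInf_le hSbdd hsS).lt_of_ne fun h => hsS.2 (h ▸ hP)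
  exact hsS.2 (hcP ⟨hs, hsc⟩)

theorem HasDerivAt.nonneg_of_isLocalMaxOn_Iic {f : ℝ → ℝ} {f' t : ℝ}
    (hf : HasDerivAt f f' t) (hmax : IsLocalMaxOn f (Iic t) t) : 0 ≤ f' := by
  refine ge_of_tendsto (hasDerivAt_iff_tendsto_slope_left_right.1 hf).1 ?_
  filter_upwards [nhdsWithin_mono t Iio_subset_Iic_self hmax, self_mem_nhdsWithin] with s hs hst
  rw [slope_def_field]
  exact div_nonneg_of_nonpos (sub_nonpos.2 hs) (sub_nonpos.2 (le_of_lt hst))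

theorem HasDerivAt.abs_lt_of_forall_Ioc_abs_le {f : ℝ → ℝ} {f' a t R : ℝ}
    (hf : HasDerivAt f f' t) (hat : a < t) (hle : ∀ s ∈ Ioc a t, |f s| ≤ R)
    (hupper : f t = R → f' < 0) (hlower : f t = -R → 0 < f') : |f t| < R := by
  refine (hle t ⟨hat, le_rfl⟩).lt_of_ne fun hR => ?_
  have hnear : ∀ᶠ s in 𝓝[≤] t, |f s| ≤ R :=
    mem_of_superset (Ioc_mem_nhdsLE hat) hle
  rcases eq_or_eq_neg_of_abs_eq hR with hft | hft
  · refine (hupper hft).not_ge (hf.nonneg_of_isLocalMaxOn_Iic ?_)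
    filter_upwards [hnear] with s hs
    exact hft ▸ (le_abs_self _).trans hs
  · refine (hlower hft).not_ge (neg_nonneg.1 (hf.neg.nonneg_of_isLocalMaxOn_Iic ?_))
    filter_upwards [hnear] with s hs
    simp only [Pi.neg_apply, hft, neg_neg]
    exact (neg_le_abs _).trans hs

theorem eventually_le_of_hasDerivAt_le_neg {f f' : ℝ → ℝ} {T M m : ℝ} (hm : 0 < m)
    (hf : ∀ t, T ≤ t → HasDerivAt f (f' t) t)
    (hf' : ∀ t, T ≤ t → M ≤ f t → f' t ≤ -m) :
    ∀ᶠ t in atTop, f t ≤ M := by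
  have hcont : ∀ a b, T ≤ a → ContinuousOn f (Icc a b) := fun a b ha s hs =>
    (hf s (ha.trans hs.1)).continuousAt.continuousWithinAt
  obtain ⟨t₁, ht₁, hft₁⟩ : ∃ t₁, T ≤ t₁ ∧ f t₁ ≤ M := by
    by_contra! hgt
    set t := T + (f T - M + 1) / m
    have hTt : T ≤ t := le_add_of_nonneg_right (div_nonneg (by linarith [hgt T le_rfl]) hm.le)
    have hdecay := image_le_of_deriv_right_le_deriv_boundary (hcont T t le_rfl)
      (fun s hs => (hf s hs.1).hasDerivWithinAt) (B := fun s => f T - m * (s - T))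
      (le_of_eq (by ring)) (by fun_prop)
      (fun s _ => (((hasDerivAt_id s).sub_const T).const_mul m |>.const_sub (f T)).hasDerivWithinAt)
      (fun s hs => by simpa using hf' s hs.1 (hgt s hs.1).le) ⟨hTt, le_rfl⟩
    have : m * (t - T) = f T - M + 1 := by simp only [t]; field_simp; ring
    linarith [hgt t hTt]
  filter_upwards [eventually_ge_atTop t₁] with t ht
  exact image_le_of_deriv_right_lt_deriv_boundary (hcont t₁ t ht₁)
    (fun s hs => (hf s (ht₁.trans hs.1)).hasDerivWithinAt) hft₁ (fun _ => hasDerivAt_const _ M)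
    (fun s hs hfs => (hf' s (ht₁.trans hs.1) hfs.ge).trans_lt (neg_neg_of_pos hm))
    ⟨ht, le_rfl⟩

theorem limsup_le_limsup_of_hasDerivAt {f f' g : ℝ → ℝ}
    (hf : ∀ᶠ t in atTop, HasDerivAt f (f' t) t)
    (hfg : ∀ ε > 0, ∃ m > 0, ∀ᶠ t in atTop, g t + ε ≤ f t → f' t ≤ -m)
    (hg : IsBoundedUnder (· ≤ ·) atTop g) (hf_cobdd : IsCoboundedUnder (· ≤ ·) atTop f) :
    limsup f atTop ≤ limsup g atTop := by
  refine le_of_forall_pos_le_add fun ε hε => limsup_le_of_le hf_cobdd ?_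
  obtain ⟨m, hm, hgf⟩ := hfg (ε / 2) (half_pos hε)
  have hgε : ∀ᶠ t in atTop, g t < limsup g atTop + ε / 2 :=
    eventually_lt_of_limsup_lt (by linarith) hg
  obtain ⟨T, hT⟩ := eventually_atTop.1 (hf.and (hgf.and hgε))
  refine eventually_le_of_hasDerivAt_le_neg hm (fun t ht => (hT t ht).1) fun t ht hft => ?_
  exact (hT t ht).2.1 (by linarith [(hT t ht).2.2])

theorem liminf_le_liminf_of_hasDerivAt {f f' g : ℝ → ℝ}
    (hf : ∀ᶠ t in atTop, HasDerivAt f (f' t) t)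
    (hfg : ∀ ε > 0, ∃ m > 0, ∀ᶠ t in atTop, f t + ε ≤ g t → m ≤ f' t)
    (hg : IsBoundedUnder (· ≥ ·) atTop g) (hf_cobdd : IsCoboundedUnder (· ≥ ·) atTop f) :
    liminf g atTop ≤ liminf f atTop := by
  refine le_of_forall_pos_le_add fun ε hε => ?_
  suffices ∀ᶠ t in atTop, liminf g atTop - ε ≤ f t by
    linarith [le_liminf_of_le hf_cobdd this]
  obtain ⟨m, hm, hgf⟩ := hfg (ε / 2) (half_pos hε)
  have hgε : ∀ᶠ t in atTop, liminf g atTop - ε / 2 < g t :=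
    eventually_lt_of_lt_liminf (by linarith) hg
  obtain ⟨T, hT⟩ := eventually_atTop.1 (hf.and (hgf.and hgε))
  have := eventually_le_of_hasDerivAt_le_neg (f := -f) (M := ε - liminf g atTop) hm
    (fun t ht => (hT t ht).1.neg) fun t ht hft => ?_
  · filter_upwards [this] with t ht
    simp only [Pi.neg_apply] at ht
    linarith
  · simp only [Pi.neg_apply] at hft ⊢
    linarith [(hT t ht).2.1 (by linarith [(hT t ht).2.2])]

theorem mem_Ioo_mul_exp_iff {c r y : ℝ} (hc : 0 < c) :
    y ∈ Ioo (c * exp (-r)) (c * exp r) ↔ 0 < y ∧ |log y - log c| < r := by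
  by_cases hy : 0 < y
  · rw [mem_Ioo, ← log_lt_log_iff (by positivity) hy, ← log_lt_log_iff hy (by positivity),
      log_mul hc.ne' (exp_pos _).ne', log_mul hc.ne' (exp_pos _).ne', log_exp, log_exp,
      abs_sub_lt_iff]
    constructor
    · exact fun h => ⟨hy, by linarith, by linarith⟩
    · exact fun h => ⟨by linarith, by linarith⟩
  · exact iff_of_false (fun h => hy ((by positivity : 0 < c * exp (-r)).trans h.1))
      (fun h => hy h.1)

theorem mem_Icc_mul_exp_iff {c r y : ℝ} (hc : 0 < c) :
    y ∈ Icc (c * exp (-r)) (c * exp r) ↔ 0 < y ∧ |log y - log c| ≤ r := by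
  by_cases hy : 0 < y
  · rw [mem_Icc, ← log_le_log_iff (by positivity) hy, ← log_le_log_iff hy (by positivity),
      log_mul hc.ne' (exp_pos _).ne', log_mul hc.ne' (exp_pos _).ne', log_exp, log_exp,
      abs_sub_le_iff]
    constructor
    · exact fun h => ⟨hy, by linarith, by linarith⟩
    · exact fun h => ⟨by linarith, by linarith⟩
  · exact iff_of_false (fun h => hy ((by positivity : 0 < c * exp (-r)).trans_le h.1))
      (fun h => hy h.1)

theorem eventually_abs_sub_le_of_mem_Ioo_mul_exp (c : ℝ) {ε : ℝ} (hε : 0 < ε) :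
    ∀ᶠ r in 𝓝 0, ∀ y ∈ Ioo (c * exp (-r)) (c * exp r), |y - c| ≤ ε := by
  have hup : Tendsto (fun r => c * exp r) (𝓝 0) (𝓝 c) := by
    simpa using (continuous_exp.tendsto 0).const_mul c
  have hdown : Tendsto (fun r => c * exp (-r)) (𝓝 0) (𝓝 c) := by
    simpa using ((continuous_exp.comp continuous_neg).tendsto 0).const_mul c
  filter_upwards [hup.eventually_lt_const (lt_add_of_pos_right c hε),
    hdown.eventually_const_lt (sub_lt_self c hε)] with r hr hr' y hy
  exact abs_le.2 ⟨by linarith [hy.1], by linarith [hy.2]⟩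

theorem exists_pos_forall_abs_sub_le_mem_Ioo_mul_exp {c r : ℝ} (hc : 0 < c) (hr : 0 < r) :
    ∃ δ > 0, ∀ y, |y - c| ≤ δ → y ∈ Ioo (c * exp (-r)) (c * exp r) := by
  obtain ⟨δ, hδ, hsub⟩ := Metric.nhds_basis_closedBall.mem_iff.1 (Ioo_mem_nhds
    (mul_lt_of_lt_one_right hc (exp_lt_one_iff.2 (neg_neg_of_pos hr)))
    (lt_mul_of_one_lt_right hc (one_lt_exp_iff.2 hr)))
  exact ⟨δ, hδ, fun y hy => hsub (by rwa [Metric.mem_closedBall, Real.dist_eq])⟩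

theorem tendsto_of_tendsto_log_sub_log {ι : Type*} {l : Filter ι} {f : ι → ℝ} {c : ℝ}
    (hc : 0 < c) (hf : ∀ᶠ i in l, 0 < f i)
    (hlog : Tendsto (fun i => log (f i) - log c) l (𝓝 0)) :
    Tendsto f l (𝓝 c) := by
  have := (continuous_exp.tendsto _).comp (hlog.add_const (log c))
  rw [zero_add, exp_log hc] at this
  exact this.congr' (hf.mono fun i hi => by simp [exp_log hi])

-- `kRate Γ D (u (h t)) (v t)` is `v'`, i.e. `K'/K` written in the logarithmic deviations.
noncomputable def kRate (Γ D s w : ℝ) : ℝ := (Γ + D) * exp (s - w) - Γ - D * exp (2 / 3 * s)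

-- `ψ s`: the value of `w` at which `kRate Γ D s w` vanishes.
noncomputable def kNullcline (Γ D s : ℝ) : ℝ :=
  log ((Γ + D) / (Γ * exp (-s) + D * exp (-s / 3)))

theorem kNullcline_denom_mul_exp (Γ D s : ℝ) :
    (Γ * exp (-s) + D * exp (-s / 3)) * exp s = Γ + D * exp (2 / 3 * s) := by
  rw [add_mul, mul_assoc, mul_assoc, ← exp_add, ← exp_add]
  ring_nf
  simp

section KNullcline

variable {Γ D : ℝ}

theorem kRate_eq (hΓ : 0 < Γ) (hD : 0 < D) (s w : ℝ) :
    kRate Γ D s w = (Γ + D * exp (2 / 3 * s)) * (exp (kNullcline Γ D s - w) - 1) := by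
  rw [kRate, sub_sub, kNullcline, exp_sub, exp_sub, exp_log (by positivity),
    ← kNullcline_denom_mul_exp, mul_sub, mul_one]
  congr 1
  field_simp

theorem kNullcline_monotone (hΓ : 0 < Γ) (hD : 0 < D) : Monotone (kNullcline Γ D) := by
  intro s s' hss'
  refine log_le_log (by positivity) (div_le_div_of_nonneg_left (by positivity) (by positivity) ?_)
  gcongr

theorem continuous_kNullcline (hΓ : 0 < Γ) (hD : 0 < D) : Continuous (kNullcline Γ D) :=
  Continuous.log (continuous_const.div (by fun_prop) fun s => by positivity) fun s => by positivity

theorem kNullcline_zero (hΓ : 0 < Γ) (hD : 0 < D) : kNullcline Γ D 0 = 0 := by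
  simp [kNullcline, div_self (by positivity : Γ + D ≠ 0)]

theorem kNullcline_lt_self (hΓ : 0 < Γ) (hD : 0 < D) {s : ℝ} (hs : 0 < s) :
    kNullcline Γ D s < s := by
  rw [kNullcline, log_lt_iff_lt_exp (by positivity), div_lt_iff₀ (by positivity), mul_comm,
    kNullcline_denom_mul_exp]
  have : 1 < exp (2 / 3 * s) := one_lt_exp_iff.2 (by positivity)
  nlinarith

theorem self_lt_kNullcline (hΓ : 0 < Γ) (hD : 0 < D) {s : ℝ} (hs : s < 0) :
    s < kNullcline Γ D s := by
  rw [kNullcline, lt_log_iff_exp_lt (by positivity), lt_div_iff₀ (by positivity), mul_comm,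
    kNullcline_denom_mul_exp]
  have : exp (2 / 3 * s) < 1 := exp_lt_one_iff.2 (by linarith)
  nlinarith

theorem kRate_le (hΓ : 0 < Γ) (hD : 0 < D) {s w ε : ℝ} (hε : 0 ≤ ε)
    (h : kNullcline Γ D s + ε ≤ w) : kRate Γ D s w ≤ -(Γ * (1 - exp (-ε))) := by
  rw [kRate_eq hΓ hD]
  have hexp : exp (kNullcline Γ D s - w) ≤ exp (-ε) := exp_le_exp.2 (by linarith)
  have hε' : exp (-ε) ≤ 1 := exp_le_one_iff.2 (by linarith)
  have : 0 < D * exp (2 / 3 * s) := by positivity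
  nlinarith

theorem le_kRate (hΓ : 0 < Γ) (hD : 0 < D) {s w ε : ℝ} (hε : 0 ≤ ε)
    (h : w + ε ≤ kNullcline Γ D s) : Γ * (exp ε - 1) ≤ kRate Γ D s w := by
  rw [kRate_eq hΓ hD]
  have hexp : exp ε ≤ exp (kNullcline Γ D s - w) := exp_le_exp.2 (by linarith)
  have hε' : 1 ≤ exp ε := one_le_exp hε
  have : 0 < D * exp (2 / 3 * s) := by positivity
  nlinarith

theorem kRate_neg (hΓ : 0 < Γ) (hD : 0 < D) {s w : ℝ} (h : kNullcline Γ D s < w) :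
    kRate Γ D s w < 0 := by
  rw [kRate_eq hΓ hD]
  exact mul_neg_of_pos_of_neg (by positivity) (sub_neg.2 (exp_lt_one_iff.2 (by linarith)))

theorem kRate_pos (hΓ : 0 < Γ) (hD : 0 < D) {s w : ℝ} (h : w < kNullcline Γ D s) :
    0 < kRate Γ D s w := by
  rw [kRate_eq hΓ hD]
  exact mul_pos (by positivity) (sub_pos.2 (one_lt_exp_iff.2 (by linarith)))

end KNullcline

section LogSystem

variable {α Γ D r : ℝ} {h u v : ℝ → ℝ}

theorem abs_lt_of_logSystem {a t s : ℝ} (hα : 0 < α) (hΓ : 0 < Γ) (hD : 0 < D) (hr : 0 < r)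
    (hu : HasDerivAt u (α * (v t - u t)) t) (hv : HasDerivAt v (kRate Γ D s (v t)) t)
    (hat : a < t) (hband : ∀ t' ∈ Ioc a t, |u t'| ≤ r ∧ |v t'| ≤ r) (hs : |s| ≤ r) :
    |u t| < r ∧ |v t| < r := by
  have hψ := kNullcline_monotone hΓ hD
  have hψs : |kNullcline Γ D s| < r := abs_lt.2
    ⟨(self_lt_kNullcline hΓ hD (neg_neg_of_pos hr)).trans_le (hψ (abs_le.1 hs).1),
      (hψ (abs_le.1 hs).2).trans_lt (kNullcline_lt_self hΓ hD hr)⟩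
  have hvt : |v t| < r := hv.abs_lt_of_forall_Ioc_abs_le hat
    (fun t' ht' => (hband t' ht').2)
    (fun hvr => kRate_neg hΓ hD (hvr ▸ (abs_lt.1 hψs).2))
    (fun hvr => kRate_pos hΓ hD (hvr ▸ (abs_lt.1 hψs).1))
  refine ⟨hu.abs_lt_of_forall_Ioc_abs_le hat (fun t' ht' => (hband t' ht').1)
    (fun hur => ?_) (fun hur => ?_), hvt⟩
  · exact mul_neg_of_pos_of_neg hα (by linarith [(abs_lt.1 hvt).2])
  · exact mul_pos hα (by linarith [(abs_lt.1 hvt).1])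

theorem logSystem_limsup_nonpos (hα : 0 < α) (hΓ : 0 < Γ) (hD : 0 < D)
    (hh : Tendsto h atTop atTop) (hu : ∀ᶠ t in atTop, HasDerivAt u (α * (v t - u t)) t)
    (hv : ∀ᶠ t in atTop, HasDerivAt v (kRate Γ D (u (h t)) (v t)) t)
    (hbdd : ∀ᶠ t in atTop, |u t| ≤ r ∧ |v t| ≤ r) :
    limsup u atTop ≤ 0 ∧ limsup v atTop ≤ 0 := by
  set ψ := kNullcline Γ D
  have hψ : Monotone ψ := kNullcline_monotone hΓ hD
  obtain ⟨hu_le, hu_ge⟩ := isBoundedUnder_le_abs.1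
    (isBoundedUnder_of_eventually_le (hbdd.mono fun _ h => h.1))
  obtain ⟨hv_le, hv_ge⟩ := isBoundedUnder_le_abs.1
    (isBoundedUnder_of_eventually_le (hbdd.mono fun _ h => h.2))
  have huh : ∀ᶠ t in atTop, |u (h t)| ≤ r := hh.eventually (hbdd.mono fun _ h => h.1)
  obtain ⟨huh_le, huh_ge⟩ := isBoundedUnder_le_abs.1 (isBoundedUnder_of_eventually_le huh)
  have hUV : limsup u atTop ≤ limsup v atTop :=
    limsup_le_limsup_of_hasDerivAt hu (fun ε hε => ⟨α * ε, by positivity,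
      Eventually.of_forall fun t ht => by nlinarith⟩) hv_le hu_ge.isCoboundedUnder_le
  have hVU : limsup v atTop ≤ ψ (limsup u atTop) := calc
    limsup v atTop ≤ limsup (ψ ∘ (u ∘ h)) atTop :=
      limsup_le_limsup_of_hasDerivAt hv (fun ε hε => ⟨Γ * (1 - exp (-ε)),
        mul_pos hΓ (sub_pos.2 (exp_lt_one_iff.2 (neg_neg_of_pos hε))),
        Eventually.of_forall fun t ht => kRate_le hΓ hD hε.le ht⟩)
        (isBoundedUnder_of_eventually_le (huh.mono fun _ ht => hψ (abs_le.1 ht).2))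
        hv_ge.isCoboundedUnder_le
    _ = ψ (limsup (u ∘ h) atTop) := (hψ.map_limsup_of_continuousAt _
        (continuous_kNullcline hΓ hD).continuousAt huh_le huh_ge.isCoboundedUnder_le).symm
    _ ≤ ψ (limsup u atTop) := hψ (hh.limsup_comp_le_limsup huh_ge.isCoboundedUnder_le hu_le)
  have hU : limsup u atTop ≤ 0 := not_lt.1 fun hpos =>
    (kNullcline_lt_self hΓ hD hpos).not_ge (hUV.trans hVU)
  exact ⟨hU, hVU.trans ((hψ hU).trans (kNullcline_zero hΓ hD).le)⟩

theorem logSystem_liminf_nonneg (hα : 0 < α) (hΓ : 0 < Γ) (hD : 0 < D)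
    (hh : Tendsto h atTop atTop) (hu : ∀ᶠ t in atTop, HasDerivAt u (α * (v t - u t)) t)
    (hv : ∀ᶠ t in atTop, HasDerivAt v (kRate Γ D (u (h t)) (v t)) t)
    (hbdd : ∀ᶠ t in atTop, |u t| ≤ r ∧ |v t| ≤ r) :
    0 ≤ liminf u atTop ∧ 0 ≤ liminf v atTop := by
  set ψ := kNullcline Γ D
  have hψ : Monotone ψ := kNullcline_monotone hΓ hD
  obtain ⟨hu_le, hu_ge⟩ := isBoundedUnder_le_abs.1
    (isBoundedUnder_of_eventually_le (hbdd.mono fun _ h => h.1))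
  obtain ⟨hv_le, hv_ge⟩ := isBoundedUnder_le_abs.1
    (isBoundedUnder_of_eventually_le (hbdd.mono fun _ h => h.2))
  have huh : ∀ᶠ t in atTop, |u (h t)| ≤ r := hh.eventually (hbdd.mono fun _ h => h.1)
  obtain ⟨huh_le, huh_ge⟩ := isBoundedUnder_le_abs.1 (isBoundedUnder_of_eventually_le huh)
  have hvu : liminf v atTop ≤ liminf u atTop :=
    liminf_le_liminf_of_hasDerivAt hu (fun ε hε => ⟨α * ε, by positivity,
      Eventually.of_forall fun t ht => by nlinarith⟩) hv_ge hu_le.isCoboundedUnder_ge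
  have huv : ψ (liminf u atTop) ≤ liminf v atTop := calc
    ψ (liminf u atTop) ≤ ψ (liminf (u ∘ h) atTop) :=
      hψ (hh.liminf_le_liminf_comp huh_le.isCoboundedUnder_ge hu_ge)
    _ = liminf (ψ ∘ (u ∘ h)) atTop := hψ.map_liminf_of_continuousAt _
        (continuous_kNullcline hΓ hD).continuousAt huh_le.isCoboundedUnder_ge huh_ge
    _ ≤ liminf v atTop :=
      liminf_le_liminf_of_hasDerivAt hv (fun ε hε => ⟨Γ * (exp ε - 1),
        mul_pos hΓ (sub_pos.2 (one_lt_exp_iff.2 hε)),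
        Eventually.of_forall fun t ht => le_kRate hΓ hD hε.le ht⟩)
        (isBoundedUnder_of_eventually_ge (huh.mono fun _ ht => hψ (abs_le.1 ht).1))
        hv_le.isCoboundedUnder_ge
  have hu : 0 ≤ liminf u atTop := not_lt.1 fun hneg =>
    (self_lt_kNullcline hΓ hD hneg).not_ge (huv.trans hvu)
  exact ⟨hu, (kNullcline_zero hΓ hD).ge.trans ((hψ hu).trans huv)⟩

theorem logSystem_tendsto_zero (hα : 0 < α) (hΓ : 0 < Γ) (hD : 0 < D)
    (hh : Tendsto h atTop atTop) (hu : ∀ᶠ t in atTop, HasDerivAt u (α * (v t - u t)) t)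
    (hv : ∀ᶠ t in atTop, HasDerivAt v (kRate Γ D (u (h t)) (v t)) t)
    (hbdd : ∀ᶠ t in atTop, |u t| ≤ r ∧ |v t| ≤ r) :
    Tendsto u atTop (𝓝 0) ∧ Tendsto v atTop (𝓝 0) := by
  obtain ⟨hu_le, hu_ge⟩ := isBoundedUnder_le_abs.1
    (isBoundedUnder_of_eventually_le (hbdd.mono fun _ h => h.1))
  obtain ⟨hv_le, hv_ge⟩ := isBoundedUnder_le_abs.1
    (isBoundedUnder_of_eventually_le (hbdd.mono fun _ h => h.2))
  obtain ⟨hU, hV⟩ := logSystem_limsup_nonpos hα hΓ hD hh hu hv hbdd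
  obtain ⟨hu₀, hv₀⟩ := logSystem_liminf_nonneg hα hΓ hD hh hu hv hbdd
  exact ⟨tendsto_of_le_liminf_of_limsup_le hu₀ hU hu_le hu_ge,
    tendsto_of_le_liminf_of_limsup_le hv₀ hV hv_le hv_ge⟩

end LogSystem

structure IsModel1Solution (α β γ δ p₀ c₀ τ t₀ : ℝ) (h x K : ℝ → ℝ) : Prop where
  continuousOn_x : ContinuousOn x (Ici (t₀ - τ))
  continuousOn_K : ContinuousOn K (Ici (t₀ - τ))
  hasDerivAt_x : ∀ t, t₀ < t → HasDerivAt x (α * x t * log (K t / x t) - p₀ * x t) t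
  hasDerivAt_K : ∀ t, t₀ < t →
    HasDerivAt K (β * x (h t) - γ * K t - δ * x (h t) ^ ((2:ℝ)/3) * K t - c₀ * K t) t

-- `x' = 0` and `K' = 0` at a point with `x > 0`, solved for `K` and rearranged.
structure IsModel1Equilibrium (α β γ δ p₀ c₀ xs Ks : ℝ) : Prop where
  pos : 0 < xs
  K_eq : Ks = xs * exp (p₀ / α)
  balance : β * xs = (γ + c₀ + δ * xs ^ ((2:ℝ)/3)) * Ks

section Model1

variable {α β γ δ p₀ c₀ τ t₀ xs Ks : ℝ} {h x K : ℝ → ℝ}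

theorem IsModel1Equilibrium.K_pos (hE : IsModel1Equilibrium α β γ δ p₀ c₀ xs Ks) : 0 < Ks :=
  hE.K_eq ▸ mul_pos hE.pos (exp_pos _)

theorem IsModel1Equilibrium.hasDerivAt_log_x (hα : 0 < α)
    (hE : IsModel1Equilibrium α β γ δ p₀ c₀ xs Ks) {t : ℝ} (hx : 0 < x t) (hK : 0 < K t)
    (hdx : HasDerivAt x (α * x t * log (K t / x t) - p₀ * x t) t) :
    HasDerivAt (fun s => log (x s) - log xs)
      (α * ((log (K t) - log Ks) - (log (x t) - log xs))) t := by
  refine ((hdx.log hx.ne').sub_const (log xs)).congr_deriv ?_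
  rw [hE.K_eq, log_mul hE.pos.ne' (exp_pos _).ne', log_exp, log_div hK.ne' hx.ne']
  field_simp
  ring

theorem IsModel1Equilibrium.hasDerivAt_log_K (hE : IsModel1Equilibrium α β γ δ p₀ c₀ xs Ks)
    {t : ℝ} (hxh : 0 < x (h t)) (hK : 0 < K t)
    (hdK : HasDerivAt K
      (β * x (h t) - γ * K t - δ * x (h t) ^ ((2:ℝ)/3) * K t - c₀ * K t) t) :
    HasDerivAt (fun s => log (K s) - log Ks) (kRate (γ + c₀) (δ * xs ^ ((2:ℝ)/3))
      (log (x (h t)) - log xs) (log (K t) - log Ks)) t := by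
  have hxs := hE.pos
  have hKs := hE.K_pos
  have hexp : exp ((log (x (h t)) - log xs) - (log (K t) - log Ks)) =
      x (h t) * Ks / (xs * K t) := by
    rw [exp_sub, exp_sub, exp_sub, exp_log hxh, exp_log hxs, exp_log hK, exp_log hKs]
    field_simp
  have hrpow : xs ^ ((2:ℝ)/3) * exp (2 / 3 * (log (x (h t)) - log xs)) =
      x (h t) ^ ((2:ℝ)/3) := by
    rw [rpow_def_of_pos hxs, rpow_def_of_pos hxh, ← exp_add]
    ring_nf
  refine ((hdK.log hK.ne').sub_const (log Ks)).congr_deriv ?_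
  rw [kRate, hexp, mul_assoc δ (xs ^ _), hrpow]
  field_simp
  linear_combination x (h t) * hE.balance

theorem IsModel1Solution.mem_Ioo_of_forall_mem_Icc {r : ℝ} (hα : 0 < α) (hΓ : 0 < γ + c₀)
    (hδ : 0 < δ) (hr : 0 < r) (hE : IsModel1Equilibrium α β γ δ p₀ c₀ xs Ks)
    (hdel : ∀ t, h t ≤ t ∧ t - h t ≤ τ)
    (hsol : IsModel1Solution α β γ δ p₀ c₀ τ t₀ h x K)
    {t : ℝ} (ht : t₀ < t)
    (hband : ∀ s ∈ Icc (t₀ - τ) t,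
      x s ∈ Icc (xs * exp (-r)) (xs * exp r) ∧ K s ∈ Icc (Ks * exp (-r)) (Ks * exp r)) :
    x t ∈ Ioo (xs * exp (-r)) (xs * exp r) ∧ K t ∈ Ioo (Ks * exp (-r)) (Ks * exp r) := by
  have hlog : ∀ s ∈ Icc (t₀ - τ) t, (0 < x s ∧ |log (x s) - log xs| ≤ r) ∧
      (0 < K s ∧ |log (K s) - log Ks| ≤ r) := fun s hs =>
    ⟨(mem_Icc_mul_exp_iff hE.pos).1 (hband s hs).1,
      (mem_Icc_mul_exp_iff hE.K_pos).1 (hband s hs).2⟩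
  have hτ : 0 ≤ τ := by linarith [hdel t]
  have hht : h t ∈ Icc (t₀ - τ) t := ⟨by linarith [hdel t], (hdel t).1⟩
  obtain ⟨⟨hxt, -⟩, hKt, -⟩ := hlog t ⟨by linarith, le_rfl⟩
  have hlt := abs_lt_of_logSystem (u := fun s => log (x s) - log xs)
    (v := fun s => log (K s) - log Ks) hα hΓ (mul_pos hδ (rpow_pos_of_pos hE.pos _)) hr
    (hE.hasDerivAt_log_x hα hxt hKt (hsol.hasDerivAt_x t ht))
    (hE.hasDerivAt_log_K (hlog (h t) hht).1.1 hKt (hsol.hasDerivAt_K t ht)) ht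
    (fun s hs => have hs' : s ∈ Icc (t₀ - τ) t := ⟨by linarith [hs.1], hs.2⟩
      ⟨(hlog s hs').1.2, (hlog s hs').2.2⟩)
    (hlog (h t) hht).1.2
  exact ⟨(mem_Ioo_mul_exp_iff hE.pos).2 ⟨hxt, hlt.1⟩,
    (mem_Ioo_mul_exp_iff hE.K_pos).2 ⟨hKt, hlt.2⟩⟩

theorem IsModel1Solution.forall_mem_Ioo {r : ℝ} (hα : 0 < α) (hΓ : 0 < γ + c₀)
    (hδ : 0 < δ) (hr : 0 < r) (hE : IsModel1Equilibrium α β γ δ p₀ c₀ xs Ks)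
    (hdel : ∀ t, h t ≤ t ∧ t - h t ≤ τ)
    (hsol : IsModel1Solution α β γ δ p₀ c₀ τ t₀ h x K)
    (hinit : ∀ t ∈ Icc (t₀ - τ) t₀,
      x t ∈ Ioo (xs * exp (-r)) (xs * exp r) ∧ K t ∈ Ioo (Ks * exp (-r)) (Ks * exp r)) :
    ∀ t, t₀ - τ ≤ t →
      x t ∈ Ioo (xs * exp (-r)) (xs * exp r) ∧ K t ∈ Ioo (Ks * exp (-r)) (Ks * exp r) := by
  have hτ : 0 ≤ τ := by linarith [hdel t₀]
  refine forall_ge_of_forall_Ico_imp (fun t ht hprev => ?_) (fun t ht hPt => ?_)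
  · rcases le_or_gt t t₀ with htt₀ | htt₀
    · exact hinit t ⟨ht, htt₀⟩
    have hleft : ∀ {f : ℝ → ℝ} {a b : ℝ}, ContinuousOn f (Ici (t₀ - τ)) →
        (∀ s ∈ Ico (t₀ - τ) t, f s ∈ Ioo a b) → f t ∈ Icc a b := fun hf hfab =>
      isClosed_Icc.mem_of_tendsto
        ((hf.continuousAt (Ici_mem_nhds (by linarith))).tendsto.mono_left nhdsWithin_le_nhds)
        (mem_of_superset (Ico_mem_nhdsLT (by linarith)) fun s hs => Ioo_subset_Icc_self (hfab s hs))
    refine hsol.mem_Ioo_of_forall_mem_Icc hα hΓ hδ hr hE hdel htt₀ fun s hs => ?_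
    rcases hs.2.lt_or_eq with hst | rfl
    · have hP := hprev s ⟨hs.1, hst⟩
      exact ⟨Ioo_subset_Icc_self hP.1, Ioo_subset_Icc_self hP.2⟩
    · exact ⟨hleft hsol.continuousOn_x fun s hs => (hprev s hs).1,
        hleft hsol.continuousOn_K fun s hs => (hprev s hs).2⟩
  · have hIoi : 𝓝[>] t ≤ 𝓝[Ici (t₀ - τ)] t :=
      nhdsWithin_mono t fun s hs => ht.trans (le_of_lt hs)
    exact hIoi (((hsol.continuousOn_x t ht).eventually (isOpen_Ioo.mem_nhds hPt.1)).and
      ((hsol.continuousOn_K t ht).eventually (isOpen_Ioo.mem_nhds hPt.2)))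

theorem IsModel1Solution.tendsto {r : ℝ} (hα : 0 < α) (hΓ : 0 < γ + c₀) (hδ : 0 < δ)
    (hE : IsModel1Equilibrium α β γ δ p₀ c₀ xs Ks)
    (hdel : ∀ t, h t ≤ t ∧ t - h t ≤ τ)
    (hsol : IsModel1Solution α β γ δ p₀ c₀ τ t₀ h x K)
    (hband : ∀ t, t₀ - τ ≤ t →
      x t ∈ Icc (xs * exp (-r)) (xs * exp r) ∧ K t ∈ Icc (Ks * exp (-r)) (Ks * exp r)) :
    Tendsto x atTop (𝓝 xs) ∧ Tendsto K atTop (𝓝 Ks) := by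
  have hh : Tendsto h atTop atTop :=
    tendsto_atTop_mono (fun t => by simp only [id]; linarith [(hdel t).2])
      (tendsto_atTop_add_const_right _ (-τ) tendsto_id)
  have hlog : ∀ᶠ t in atTop, (0 < x t ∧ |log (x t) - log xs| ≤ r) ∧
      (0 < K t ∧ |log (K t) - log Ks| ≤ r) := eventually_atTop.2 ⟨t₀ - τ, fun t ht =>
    ⟨(mem_Icc_mul_exp_iff hE.pos).1 (hband t ht).1,
      (mem_Icc_mul_exp_iff hE.K_pos).1 (hband t ht).2⟩⟩
  have hu : ∀ᶠ t in atTop, HasDerivAt (fun s => log (x s) - log xs)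
      (α * ((log (K t) - log Ks) - (log (x t) - log xs))) t := by
    filter_upwards [hlog, eventually_gt_atTop t₀] with t ht ht₀
    exact hE.hasDerivAt_log_x hα ht.1.1 ht.2.1 (hsol.hasDerivAt_x t ht₀)
  have hv : ∀ᶠ t in atTop, HasDerivAt (fun s => log (K s) - log Ks) (kRate (γ + c₀)
      (δ * xs ^ ((2:ℝ)/3)) (log (x (h t)) - log xs) (log (K t) - log Ks)) t := by
    filter_upwards [hlog, hh.eventually hlog, eventually_gt_atTop t₀] with t ht hht ht₀
    exact hE.hasDerivAt_log_K hht.1.1 ht.2.1 (hsol.hasDerivAt_K t ht₀)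
  obtain ⟨hu0, hv0⟩ := logSystem_tendsto_zero hα hΓ (mul_pos hδ (rpow_pos_of_pos hE.pos _))
    hh hu hv (hlog.mono fun t ht => ⟨ht.1.2, ht.2.2⟩)
  exact ⟨tendsto_of_tendsto_log_sub_log hE.pos (hlog.mono fun t ht => ht.1.1) hu0,
    tendsto_of_tendsto_log_sub_log hE.K_pos (hlog.mono fun t ht => ht.2.1) hv0⟩

end Model1

theorem isModel1Equilibrium_of_lt {α β γ δ p₀ c₀ : ℝ} (hδ : 0 < δ)
    (hcond : (γ + c₀) * exp (p₀ / α) < β) :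
    IsModel1Equilibrium α β γ δ p₀ c₀
      (((β * exp (-(p₀ / α)) - γ - c₀) / δ) ^ ((3:ℝ)/2))
      ((((β * exp (-(p₀ / α)) - γ - c₀) / δ) ^ ((3:ℝ)/2)) * exp (p₀ / α)) := by
  have hexp : exp (p₀ / α) * exp (-(p₀ / α)) = 1 := by
    rw [← exp_add, add_neg_cancel, exp_zero]
  have hq : 0 < (β * exp (-(p₀ / α)) - γ - c₀) / δ := by
    have := mul_lt_mul_of_pos_right hcond (exp_pos (-(p₀ / α)))
    rw [mul_assoc, hexp, mul_one] at this
    exact div_pos (by linarith) hδ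
  refine ⟨rpow_pos_of_pos hq _, rfl, ?_⟩
  rw [← rpow_mul hq.le, show (3:ℝ) / 2 * (2 / 3) = 1 by norm_num, rpow_one]
  field_simp
  linear_combination (-β) * hexp

theorem model1_equilibrium_locally_asymptotically_stable_general
    (α β γ δ p₀ c₀ τ t₀ : ℝ)
    (hα : 0 < α) (hγ : 0 < γ) (hδ : 0 < δ)
    (hc₀ : 0 < c₀)
    (h : ℝ → ℝ) (hdel : ∀ t, h t ≤ t ∧ t - h t ≤ τ)
    (hcond : β > (γ + c₀) * Real.exp (p₀ / α)) :
    let η := β * Real.exp (-(p₀ / α))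
    let xstar := ((η - γ - c₀) / δ) ^ ((3:ℝ)/2)
    let Kstar := xstar * Real.exp (p₀ / α)
    ∀ ε > 0, ∃ δ' > 0, ∀ x K : ℝ → ℝ,
      ContinuousOn x (Set.Ici (t₀ - τ)) → ContinuousOn K (Set.Ici (t₀ - τ)) →
      (∀ t, t₀ < t →
        HasDerivAt x (α * x t * Real.log (K t / x t) - p₀ * x t) t) →
      (∀ t, t₀ < t →
        HasDerivAt K
          (β * x (h t) - γ * K t - δ * x (h t) ^ ((2:ℝ)/3) * K t - c₀ * K t) t) →
      (∀ t ∈ Set.Icc (t₀ - τ) t₀, |x t - xstar| ≤ δ' ∧ |K t - Kstar| ≤ δ') →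
      (∀ t, t₀ ≤ t → |x t - xstar| ≤ ε ∧ |K t - Kstar| ≤ ε) ∧
      Tendsto x atTop (nhds xstar) ∧ Tendsto K atTop (nhds Kstar) := by
  intro η xstar Kstar ε hε
  have hE : IsModel1Equilibrium α β γ δ p₀ c₀ xstar Kstar :=
    isModel1Equilibrium_of_lt hδ hcond
  have hΓ : 0 < γ + c₀ := by positivity
  obtain ⟨r, ⟨hrx, hrK⟩, hr⟩ := (((eventually_abs_sub_le_of_mem_Ioo_mul_exp xstar hε).and
    (eventually_abs_sub_le_of_mem_Ioo_mul_exp Kstar hε)).filter_mono nhdsWithin_le_nhds).and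
    (self_mem_nhdsWithin (s := Ioi 0)) |>.exists
  obtain ⟨δx, hδx, hx⟩ := exists_pos_forall_abs_sub_le_mem_Ioo_mul_exp hE.pos hr
  obtain ⟨δK, hδK, hK⟩ := exists_pos_forall_abs_sub_le_mem_Ioo_mul_exp hE.K_pos hr
  refine ⟨min δx δK, lt_min hδx hδK, fun x K hcx hcK hdx hdK hinit => ?_⟩
  have hsol : IsModel1Solution α β γ δ p₀ c₀ τ t₀ h x K := ⟨hcx, hcK, hdx, hdK⟩
  have hband := hsol.forall_mem_Ioo hα hΓ hδ hr hE hdel fun t ht =>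
    ⟨hx _ ((hinit t ht).1.trans (min_le_left _ _)),
      hK _ ((hinit t ht).2.trans (min_le_right _ _))⟩
  refine ⟨fun t ht => ?_, hsol.tendsto (r := r) hα hΓ hδ hE hdel fun t ht => ?_⟩
  · have := hband t (by linarith [hdel t₀])
    exact ⟨hrx _ this.1, hrK _ this.2⟩
  · exact ⟨Ioo_subset_Icc_self (hband t ht).1, Ioo_subset_Icc_self (hband t ht).2⟩

/-- Theorem 3 (local asymptotic stability for Model 1 with constant treatment):
for the system dx/dt = αx ln(K/x) − p₀x, dK/dt = βx(h(t)) − γK − δx^{2/3}(h(t))K − c₀K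
with t − h(t) ≤ τ and β > (γ + c₀)e^{p₀/α}, the positive equilibrium
(x*, K*) = (((η − γ − c₀)/δ)^{3/2}, x* e^{p₀/α}), η = βe^{−p₀/α}, is locally
asymptotically stable: for every ε > 0 there is δ' > 0 such that every solution
whose initial data on [t₀ − τ, t₀] stays within δ' of (x*, K*) remains within ε
for all t ≥ t₀ and converges to (x*, K*). -/
theorem model1_equilibrium_locally_asymptotically_stable
    (α β γ δ p₀ c₀ τ t₀ : ℝ)
    (hα : 0 < α) (hβ : 0 < β) (hγ : 0 < γ) (hδ : 0 < δ)
    (hp₀ : 0 < p₀) (hc₀ : 0 < c₀) (hτ : 0 < τ)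
    (h : ℝ → ℝ) (hhm : Measurable h) (hdel : ∀ t, h t ≤ t ∧ t - h t ≤ τ)
    (hcond : β > (γ + c₀) * Real.exp (p₀ / α)) :
    let η := β * Real.exp (-(p₀ / α))
    let xstar := ((η - γ - c₀) / δ) ^ ((3:ℝ)/2)
    let Kstar := xstar * Real.exp (p₀ / α)
    ∀ ε > 0, ∃ δ' > 0, ∀ x K : ℝ → ℝ,
      ContinuousOn x (Set.Ici (t₀ - τ)) → ContinuousOn K (Set.Ici (t₀ - τ)) →
      (∀ t, t₀ < t →
        HasDerivAt x (α * x t * Real.log (K t / x t) - p₀ * x t) t) →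
      (∀ t, t₀ < t →
        HasDerivAt K
          (β * x (h t) - γ * K t - δ * x (h t) ^ ((2:ℝ)/3) * K t - c₀ * K t) t) →
      (∀ t ∈ Set.Icc (t₀ - τ) t₀, |x t - xstar| ≤ δ' ∧ |K t - Kstar| ≤ δ') →
      (∀ t, t₀ ≤ t → |x t - xstar| ≤ ε ∧ |K t - Kstar| ≤ ε) ∧
      Tendsto x atTop (nhds xstar) ∧ Tendsto K atTop (nhds Kstar) :=
  model1_equilibrium_locally_asymptotically_stable_general α β γ δ p₀ c₀ τ t₀ hα hγ hδ hc₀ h hdel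
    hcond
end
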